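/- arXiv:1309.6587 — 2 statements merged into one kernel-verified Lean document; each statement's English description precedes it below -/
import Mathlib

section
/- Let K be a field, and consider the formal power series ring K[[y₁,…,yₙ]]. Let f₁,…,f_p (p ≤ n) be power series of the form f_i = y_i + g_i where each g_i has zero constant term and depends only on the variables y_{p+1},…,yₙ (i.e., g_i ∈ K[[y_{p+1},…,yₙ]] with g_i(0) = 0). Then for every f ∈ K[[y₁,…,yₙ]] there exist q₁,…,q_p ∈ K[[y₁,…,yₙ]] and a unique r ∈ K[[y_{p+1},…,yₙ]] such that f = Σ_{i=1}^p q_i f_i + r. -/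
/-! The substitution `yᵢ ↦ yᵢ + gᵢ` (`i ≤ p`) fixes every series in `y_{p+1}, …, yₙ`, in
particular the `gᵢ`, so it is an automorphism of `K[[y₁, …, yₙ]]` with inverse `yᵢ ↦ yᵢ - gᵢ`.
It carries the ideal `(y₁, …, y_p)` onto `(f₁, …, f_p)`, which reduces the statement to the
case `gᵢ = 0`. There `f - r ∈ (y₁, …, y_p)` with `r ∈ K[[y_{p+1}, …, yₙ]]` says exactly that
`r` is the sum of the terms of `f` that involve none of `y₁, …, y_p`. -/

/-- `f ∈ K[[y₁,…,yₙ]]` depends only on the parametric variables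
`y_{p+1},…,yₙ` (indices `≥ p`): every coefficient of a monomial involving a
variable of index `< p` vanishes. -/
def LateOnly (K : Type) [CommSemiring K] (n p : ℕ)
    (f : MvPowerSeries (Fin n) K) : Prop :=
  ∀ d : Fin n →₀ ℕ, (∃ j : Fin n, j.val < p ∧ d j ≠ 0) →
    MvPowerSeries.coeff d f = 0

namespace MvPowerSeries

variable {σ R : Type*} [CommRing R]

def IsFreeOf (S : Set σ) (f : MvPowerSeries σ R) : Prop :=
  ∀ d : σ →₀ ℕ, (∃ s ∈ S, d s ≠ 0) → coeff d f = 0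

open Classical in
noncomputable def freePart (S : Set σ) : MvPowerSeries σ R →ₗ[R] MvPowerSeries σ R :=
  LinearMap.pi fun d => if ∀ s ∈ S, d s = 0 then coeff d else 0

variable {S : Set σ}

theorem coeff_freePart_of_forall {d : σ →₀ ℕ} (hd : ∀ s ∈ S, d s = 0)
    (f : MvPowerSeries σ R) : coeff d (freePart S f) = coeff d f :=
  congrArg (fun L : MvPowerSeries σ R →ₗ[R] R => L f) (if_pos hd)

theorem coeff_freePart_of_exists {d : σ →₀ ℕ} (hd : ∃ s ∈ S, d s ≠ 0)
    (f : MvPowerSeries σ R) : coeff d (freePart S f) = 0 := by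
  obtain ⟨s, hs, hds⟩ := hd
  exact congrArg (fun L : MvPowerSeries σ R →ₗ[R] R => L f) (if_neg fun h => hds (h s hs))

theorem isFreeOf_freePart (f : MvPowerSeries σ R) : IsFreeOf S (freePart S f) :=
  fun _ hd => coeff_freePart_of_exists hd f

theorem IsFreeOf.freePart_eq {f : MvPowerSeries σ R} (hf : IsFreeOf S f) :
    freePart S f = f := by
  ext d
  by_cases hd : ∃ s ∈ S, d s ≠ 0
  · rw [coeff_freePart_of_exists hd, hf d hd]
  · push Not at hd
    exact coeff_freePart_of_forall hd f

theorem freePart_mul_eq_zero {x : MvPowerSeries σ R} (hx : freePart S x = 0)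
    (a : MvPowerSeries σ R) : freePart S (a * x) = 0 := by
  classical
  ext d
  by_cases hd : ∀ s ∈ S, d s = 0
  · rw [coeff_freePart_of_forall hd, coeff_mul, map_zero]
    refine Finset.sum_eq_zero fun uv huv => ?_
    have hv : ∀ s ∈ S, uv.2 s = 0 := fun s hs => by
      have := congrArg (· s) (Finset.HasAntidiagonal.mem_antidiagonal.mp huv)
      simp only [Finsupp.add_apply, hd s hs] at this
      omega
    rw [← coeff_freePart_of_forall hv, hx, map_zero, mul_zero]
  · push Not at hd
    rw [coeff_freePart_of_exists hd, map_zero]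

theorem freePart_X_eq_zero {s : σ} (hs : s ∈ S) : freePart S (X s : MvPowerSeries σ R) = 0 := by
  classical
  ext d
  by_cases hd : ∀ t ∈ S, d t = 0
  · rw [coeff_freePart_of_forall hd, coeff_X, if_neg, map_zero]
    rintro rfl
    simpa using hd s hs
  · push Not at hd
    rw [coeff_freePart_of_exists hd, map_zero]

theorem freePart_eq_zero_of_mem_span {x : MvPowerSeries σ R}
    (hx : x ∈ Ideal.span (X '' S)) : freePart S x = 0 := by
  induction hx using Submodule.span_induction with
  | mem _ h => obtain ⟨s, hs, rfl⟩ := h; exact freePart_X_eq_zero hs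
  | zero => exact map_zero _
  | add _ _ _ _ hx hy => rw [map_add, hx, hy, add_zero]
  | smul a _ _ hx => exact freePart_mul_eq_zero hx a

theorem sub_freePart_mem_span (hS : S.Finite) (f : MvPowerSeries σ R) :
    f - freePart S f ∈ Ideal.span (X '' S) := by
  induction S, hS using Set.Finite.induction_on with
  | empty =>
    have : IsFreeOf (∅ : Set σ) f := fun _ ⟨_, h, _⟩ => h.elim
    simp [this.freePart_eq]
  | @insert s T _ _ ih =>
    have hdvd : X s ∣ freePart T f - freePart (insert s T) f := by
      refine X_dvd_iff.mpr fun m hm => ?_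
      rw [map_sub, sub_eq_zero]
      by_cases hT : ∀ t ∈ T, m t = 0
      · rw [coeff_freePart_of_forall hT, coeff_freePart_of_forall]
        simpa [hm] using hT
      · push Not at hT
        obtain ⟨t, ht, hmt⟩ := hT
        rw [coeff_freePart_of_exists ⟨t, ht, hmt⟩,
          coeff_freePart_of_exists ⟨t, Set.mem_insert_of_mem s ht, hmt⟩]
    obtain ⟨c, hc⟩ := hdvd
    rw [← sub_add_sub_cancel _ (freePart T f), hc]
    exact add_mem (Ideal.span_mono (Set.image_mono (Set.subset_insert s T)) ih)
      (Ideal.mul_mem_right _ _ (Ideal.subset_span ⟨s, Set.mem_insert s T, rfl⟩))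

theorem mem_span_X_iff_freePart_eq_zero (hS : S.Finite) {x : MvPowerSeries σ R} :
    x ∈ Ideal.span (X '' S) ↔ freePart S x = 0 := by
  refine ⟨freePart_eq_zero_of_mem_span, fun hx => ?_⟩
  simpa [hx] using sub_freePart_mem_span hS x

theorem subst_self_apply (f : MvPowerSeries σ R) : subst X f = f :=
  congrFun subst_self f

theorem IsFreeOf.subst_eq_self {a : σ → MvPowerSeries σ R} (ha : HasSubst a)
    (haS : ∀ s ∉ S, a s = X s) {f : MvPowerSeries σ R} (hf : IsFreeOf S f) :
    subst a f = f := by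
  ext e
  conv_rhs => rw [← subst_self_apply f]
  rw [coeff_subst ha, coeff_subst HasSubst.X]
  refine finsum_congr fun d => ?_
  by_cases hd : ∃ s ∈ S, d s ≠ 0
  · rw [hf d hd, zero_smul, zero_smul]
  · push Not at hd
    rw [Finsupp.prod_congr fun s hs => by
      rw [haS s fun hsS => Finsupp.mem_support_iff.mp hs (hd s hsS)]]

section Translate

variable {ι : Type*} (e : ι → σ)

noncomputable def translate (g : ι → MvPowerSeries σ R) (s : σ) : MvPowerSeries σ R :=
  X s + Function.extend e g 0 s

variable {e} {g : ι → MvPowerSeries σ R}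

theorem translate_apply_of_injective (he : Function.Injective e) (i : ι) :
    translate e g (e i) = X (e i) + g i := by
  rw [translate, he.extend_apply]

theorem translate_of_notMem_range {s : σ} (hs : s ∉ Set.range e) : translate e g s = X s := by
  rw [translate, Function.extend_apply' _ _ _ fun ⟨i, hi⟩ => hs ⟨i, hi⟩, Pi.zero_apply, add_zero]

theorem translate_neg (s : σ) : translate e (-g) s = X s - Function.extend e g 0 s := by
  classical
  rw [translate, Function.extend_def, Function.extend_def, sub_eq_add_neg]
  split_ifs <;> simp

theorem hasSubst_translate [Finite ι] (hg0 : ∀ i, constantCoeff (g i) = 0) :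
    HasSubst (translate e g) := by
  classical
  refine HasSubst.add HasSubst.X ⟨fun s => ?_, fun d => ?_⟩
  · rw [Function.extend_def]
    split_ifs <;> simp [hg0]
  · refine (Set.finite_range e).subset fun s hs => ?_
    by_contra h
    exact hs (by rw [Function.extend_apply' _ _ _ fun ⟨i, hi⟩ => h ⟨i, hi⟩]; simp)

theorem hasSubst_translate_neg [Finite ι] (hg0 : ∀ i, constantCoeff (g i) = 0) :
    HasSubst (translate e (-g)) :=
  hasSubst_translate fun i => by rw [Pi.neg_apply, map_neg, hg0, neg_zero]

theorem isFreeOf_extend (hg : ∀ i, IsFreeOf (Set.range e) (g i)) (s : σ) :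
    IsFreeOf (Set.range e) (Function.extend e g 0 s) := by
  classical
  rw [Function.extend_def]
  split_ifs
  · exact hg _
  · exact fun d _ => map_zero _

theorem subst_translate_subst_translate_neg [Finite ι] (hg0 : ∀ i, constantCoeff (g i) = 0)
    (hg : ∀ i, IsFreeOf (Set.range e) (g i)) (f : MvPowerSeries σ R) :
    subst (translate e g) (subst (translate e (-g)) f) = f := by
  have ha := hasSubst_translate (e := e) hg0
  have ha' := hasSubst_translate_neg (e := e) hg0
  rw [subst_comp_subst_apply ha' ha]
  conv_rhs => rw [← subst_self_apply f]
  congr 1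
  funext s
  rw [translate_neg, subst_sub ha, subst_X ha,
    (isFreeOf_extend hg s).subst_eq_self ha fun t ht => translate_of_notMem_range ht,
    translate, add_sub_cancel_right]

theorem map_span_X_translate [Finite ι] (he : Function.Injective e)
    (hg0 : ∀ i, constantCoeff (g i) = 0) :
    Ideal.map (substAlgHom (R := R) (hasSubst_translate (e := e) hg0))
        (Ideal.span (X '' Set.range e)) =
      Ideal.span (Set.range fun i => X (e i) + g i) := by
  rw [Ideal.map_span, ← Set.range_comp, ← Set.range_comp]
  congr 2
  funext i
  rw [Function.comp_apply, Function.comp_apply, substAlgHom_apply,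
    subst_X (hasSubst_translate hg0), translate_apply_of_injective he]

theorem map_span_translate_neg [Finite ι] (he : Function.Injective e)
    (hg0 : ∀ i, constantCoeff (g i) = 0) (hg : ∀ i, IsFreeOf (Set.range e) (g i)) :
    Ideal.map (substAlgHom (R := R) (hasSubst_translate_neg (e := e) hg0))
        (Ideal.span (Set.range fun i => X (e i) + g i)) =
      Ideal.span (X '' Set.range e) := by
  have ha := hasSubst_translate_neg (e := e) hg0
  rw [Ideal.map_span, ← Set.range_comp, ← Set.range_comp]
  congr 2
  funext i
  rw [Function.comp_apply, Function.comp_apply, substAlgHom_apply, subst_add ha, subst_X ha,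
    translate_apply_of_injective he,
    (hg i).subst_eq_self ha fun s hs => translate_of_notMem_range hs, Pi.neg_apply,
    neg_add_cancel_right]

theorem sub_mem_span_translate_iff [Finite ι] (he : Function.Injective e)
    (hg0 : ∀ i, constantCoeff (g i) = 0) (hg : ∀ i, IsFreeOf (Set.range e) (g i))
    (f : MvPowerSeries σ R) {r : MvPowerSeries σ R} (hr : IsFreeOf (Set.range e) r) :
    f - r ∈ Ideal.span (Set.range fun i => X (e i) + g i) ↔
      r = freePart (Set.range e) (subst (translate e (-g)) f) := by
  have ha' := hasSubst_translate_neg (e := e) hg0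
  have hr' : subst (translate e (-g)) r = r :=
    hr.subst_eq_self ha' fun s hs => translate_of_notMem_range hs
  calc f - r ∈ Ideal.span (Set.range fun i => X (e i) + g i)
        ↔ subst (translate e (-g)) (f - r) ∈ Ideal.span (X '' Set.range e) := by
        refine ⟨fun h => ?_, fun h => ?_⟩
        · rw [← map_span_translate_neg he hg0 hg, ← substAlgHom_apply ha']
          exact Ideal.mem_map_of_mem _ h
        · rw [← map_span_X_translate he hg0, ← subst_translate_subst_translate_neg hg0 hg (f - r),
            ← substAlgHom_apply (hasSubst_translate hg0)]
          exact Ideal.mem_map_of_mem _ h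
    _ ↔ r = freePart (Set.range e) (subst (translate e (-g)) f) := by
        rw [subst_sub ha', hr', mem_span_X_iff_freePart_eq_zero (Set.finite_range e), map_sub,
          hr.freePart_eq, sub_eq_zero, eq_comm]

end Translate

end MvPowerSeries

open MvPowerSeries

theorem lateOnly_iff_isFreeOf_range_castLE {K : Type} [CommRing K] {n p : ℕ} (hp : p ≤ n)
    {f : MvPowerSeries (Fin n) K} :
    LateOnly K n p f ↔ IsFreeOf (Set.range (Fin.castLE hp)) f := by
  rw [Fin.range_castLE]
  rfl

/-- Division lemma: if `fᵢ = yᵢ + gᵢ` with `gᵢ ∈ K[[y_{p+1},…,yₙ]]`,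
`gᵢ(0) = 0`, then every `f ∈ K[[y₁,…,yₙ]]` can be written as
`f = Σ qᵢ fᵢ + r` with `r ∈ K[[y_{p+1},…,yₙ]]`, and `r` is unique. -/
theorem stmt_8 (K : Type) [Field K] (n p : ℕ) (hp : p ≤ n)
    (g : Fin p → MvPowerSeries (Fin n) K)
    (hlate : ∀ i, LateOnly K n p (g i))
    (h0 : ∀ i, MvPowerSeries.constantCoeff (g i) = 0)
    (f : MvPowerSeries (Fin n) K) :
    (∃ (q : Fin p → MvPowerSeries (Fin n) K) (r : MvPowerSeries (Fin n) K),
        LateOnly K n p r ∧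
        f = (∑ i : Fin p, q i * (MvPowerSeries.X (Fin.castLE hp i) + g i)) + r) ∧
    (∀ (q₁ q₂ : Fin p → MvPowerSeries (Fin n) K)
        (r₁ r₂ : MvPowerSeries (Fin n) K),
        LateOnly K n p r₁ → LateOnly K n p r₂ →
        f = (∑ i : Fin p, q₁ i * (MvPowerSeries.X (Fin.castLE hp i) + g i)) + r₁ →
        f = (∑ i : Fin p, q₂ i * (MvPowerSeries.X (Fin.castLE hp i) + g i)) + r₂ →
        r₁ = r₂) := by
  have hfree := fun r => lateOnly_iff_isFreeOf_range_castLE (K := K) hp (f := r)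
  have hdiv := fun r (hr : LateOnly K n p r) =>
    sub_mem_span_translate_iff (Fin.castLE_injective hp) h0
      (fun i => (hfree _).mp (hlate i)) f ((hfree r).mp hr)
  have hspan : ∀ (q : Fin p → MvPowerSeries (Fin n) K) r,
      f = (∑ i : Fin p, q i * (X (Fin.castLE hp i) + g i)) + r →
      f - r ∈ Ideal.span (Set.range fun i => X (Fin.castLE hp i) + g i) :=
    fun q r h => Ideal.mem_span_range_iff_exists_fun.mpr ⟨q, eq_sub_of_add_eq h.symm⟩
  refine ⟨?_, fun q₁ q₂ r₁ r₂ hr₁ hr₂ h₁ h₂ =>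
    ((hdiv r₁ hr₁).mp (hspan q₁ r₁ h₁)).trans ((hdiv r₂ hr₂).mp (hspan q₂ r₂ h₂)).symm⟩
  set r := freePart (Set.range (Fin.castLE hp)) (subst (translate (Fin.castLE hp) (-g)) f)
  have hr : LateOnly K n p r := (hfree r).mpr (isFreeOf_freePart _)
  obtain ⟨q, hq⟩ := Ideal.mem_span_range_iff_exists_fun.mp ((hdiv r hr).mpr rfl)
  exact ⟨q, r, hr, sub_eq_iff_eq_add.mp hq.symm⟩
end

section
/- Under the hypotheses of the division lemma (f_i = y_i + g_i with g_i ∈ K[[y_{p+1},…,yₙ]], g_i(0)=0, for i = 1,…,p), if μ₁,…,μ_p ∈ K[[y₁,…,yₙ]] and h ∈ K[[y_{p+1},…,yₙ]] satisfy Σ_{i=1}^p μ_i f_i = h, then h = 0. -/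
/-!
Substitute `yᵢ ↦ -gᵢ` for the first `p` variables and keep the others. This is a legitimate
substitution because `gᵢ(0) = 0`, it fixes every series in `K[[y_{p+1},…,yₙ]]` (in particular `h`
and the `gᵢ`), and it kills each `fᵢ = yᵢ + gᵢ`. Applying it to `Σ μᵢ fᵢ = h` gives `0 = h`.
-/

open MvPowerSeries

theorem MvPowerSeries.subst_eq_self_of_forall_coeff_ne_zero {σ R : Type*} [CommRing R]
    {a : σ → MvPowerSeries σ R} (ha : HasSubst a) {f : MvPowerSeries σ R}
    (hf : ∀ d, coeff d f ≠ 0 → ∀ s ∈ d.support, a s = X s) :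
    subst a f = f := by
  classical
  ext e
  have hsummand : ∀ d, coeff d f • coeff e (d.prod fun s k => a s ^ k)
      = coeff d f * coeff e (monomial d (1 : R)) := by
    intro d
    by_cases hd : coeff d f = 0
    · simp [hd]
    · rw [monomial_one_eq, smul_eq_mul,
        Finsupp.prod_congr fun s hs => by rw [hf d hd s hs]]
  rw [coeff_subst ha, funext hsummand, finsum_eq_single _ e fun d hd => by
    rw [coeff_monomial, if_neg (Ne.symm hd), mul_zero], coeff_monomial_same, mul_one]

theorem LateOnly.subst_eq_self {K : Type} [CommRing K] {n p : ℕ}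
    {a : Fin n → MvPowerSeries (Fin n) K} (ha : HasSubst a)
    (haX : ∀ j : Fin n, p ≤ j.val → a j = X j) {f : MvPowerSeries (Fin n) K}
    (hf : LateOnly K n p f) :
    subst a f = f :=
  subst_eq_self_of_forall_coeff_ne_zero ha fun d hd j hj =>
    haX j (not_lt.mp fun hjp => hd (hf d ⟨j, hjp, Finsupp.mem_support_iff.mp hj⟩))

/-- If `fᵢ = yᵢ + gᵢ` with `gᵢ ∈ K[[y_{p+1},…,yₙ]]`, `gᵢ(0) = 0`, and
`Σ μᵢ fᵢ = h` with `h ∈ K[[y_{p+1},…,yₙ]]`, then `h = 0`. -/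
theorem stmt_9 (K : Type) [Field K] (n p : ℕ) (hp : p ≤ n)
    (g : Fin p → MvPowerSeries (Fin n) K)
    (hlate : ∀ i, LateOnly K n p (g i))
    (h0 : ∀ i, MvPowerSeries.constantCoeff (g i) = 0)
    (μ : Fin p → MvPowerSeries (Fin n) K) (h : MvPowerSeries (Fin n) K)
    (hh : LateOnly K n p h)
    (hsum : (∑ i : Fin p, μ i * (MvPowerSeries.X (Fin.castLE hp i) + g i)) = h) :
    h = 0 := by
  let a : Fin n → MvPowerSeries (Fin n) K :=
    fun j => if hj : j.val < p then -g ⟨j, hj⟩ else X j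
  have ha : HasSubst a := hasSubst_of_constantCoeff_zero fun j => by
    by_cases hj : j.val < p <;> simp [a, hj, h0]
  have haX : ∀ j : Fin n, p ≤ j.val → a j = X j := fun j hj => dif_neg (not_lt.mpr hj)
  have hkill : ∀ i, subst a (X (Fin.castLE hp i) + g i) = 0 := fun i => by
    rw [subst_add ha, subst_X ha, (hlate i).subst_eq_self ha haX,
      show a (Fin.castLE hp i) = -g i from dif_pos i.isLt, neg_add_cancel]
  calc h = subst a h := (hh.subst_eq_self ha haX).symm
    _ = ∑ i, subst a (μ i) * subst a (X (Fin.castLE hp i) + g i) := by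
      simp only [← hsum, ← substAlgHom_apply ha, map_sum, map_mul]
    _ = 0 := by simp only [hkill, mul_zero, Finset.sum_const_zero]
end
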